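/- Let V, W be finite-dimensional inner product spaces and let 𝒜 : ℝⁿ \ {0} → Lin(V, W) be continuous and positively homogeneous of degree k (i.e. 𝒜(tξ) = t^k 𝒜(ξ) for t > 0). Suppose there is C > 0 with |ξ|^k ‖𝒜(ξ)* w‖ ≤ C ‖𝒜(ξ) 𝒜(ξ)* w‖ for all w ∈ W and ξ ≠ 0. Then rank(𝒜(ξ)) is constant on ℝⁿ \ {0} provided n ≥ 2. -/

import Mathlib

/-!
The hypothesis says that, for `ξ` near a fixed `ξ₀ ≠ 0`, every `w ∈ im 𝒜(ξ)` has a preimage of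
norm at most `M ‖w‖` with `M = C / (|ξ₀|/2)^k` independent of `ξ`. If `B` has such preimages and
`‖A - B‖ M < 1`, then no nonzero vector of `im B` is orthogonal to `im A`, so `rank B ≤ rank A`.
Applied in both directions this makes the rank locally constant on `ℝⁿ \ {0}`, which is
connected for `n ≥ 2`.
-/

open Module LinearMap Metric Filter Topology Polynomial

/-- Orthogonal projection onto a submodule, as an endomorphism. -/
noncomputable def orthProj {E : Type*} [NormedAddCommGroup E] [InnerProductSpace ℝ E]
    [FiniteDimensional ℝ E] (K : Submodule ℝ E) : E →L[ℝ] E :=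
  K.subtypeL.comp K.orthogonalProjectionOnto

/-- `X` is the Moore–Penrose pseudoinverse of `A`: `A X = Proj_{im A}`,
`X A = Proj_{im A*}`, together with the normalization `X Proj_{im A} = X`
(i.e. `X` vanishes on `(im A)ᗮ`), which pins `X` down uniquely. -/
def IsMP {V W : Type*} [NormedAddCommGroup V] [InnerProductSpace ℝ V] [FiniteDimensional ℝ V]
    [NormedAddCommGroup W] [InnerProductSpace ℝ W] [FiniteDimensional ℝ W]
    (A : V →L[ℝ] W) (X : W →L[ℝ] V) : Prop :=
  A ∘L X = orthProj (LinearMap.range (A : V →ₗ[ℝ] W)) ∧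
  X ∘L A = orthProj (LinearMap.range (ContinuousLinearMap.adjoint A : W →ₗ[ℝ] V)) ∧
  X ∘L orthProj (LinearMap.range (A : V →ₗ[ℝ] W)) = X

/-- For `M ≥ 0`: the Moore–Penrose inverse of `A` has norm at most `M`. -/
def PreimageBound {V W : Type*} [NormedAddCommGroup V] [NormedAddCommGroup W]
    [NormedSpace ℝ V] [NormedSpace ℝ W] (A : V →L[ℝ] W) (M : ℝ) : Prop :=
  ∀ w ∈ LinearMap.range (A : V →ₗ[ℝ] W), ∃ v, A v = w ∧ ‖v‖ ≤ M * ‖w‖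

section PreimageBound

variable {V W : Type*} [NormedAddCommGroup V] [InnerProductSpace ℝ V]
  [NormedAddCommGroup W] [InnerProductSpace ℝ W]

/-- If `w = B v ⊥ range A`, then `‖w‖² = ⟪(B - A) v, w⟫ ≤ ‖A - B‖ M ‖w‖²`. -/
theorem PreimageBound.disjoint_range_orthogonal {A B : V →L[ℝ] W} {M : ℝ}
    (hB : PreimageBound B M) (hAB : ‖A - B‖ * M < 1) :
    Disjoint (LinearMap.range (B : V →ₗ[ℝ] W)) (LinearMap.range (A : V →ₗ[ℝ] W))ᗮ := by
  rw [Submodule.disjoint_def]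
  intro w hwB hwA
  obtain ⟨v, rfl, hv⟩ := hB w hwB
  have horth : inner ℝ (A v) (B v) = 0 := hwA (A v) ⟨v, rfl⟩
  have hsq : ‖B v‖ ^ 2 ≤ (‖A - B‖ * M) * ‖B v‖ ^ 2 :=
    calc ‖B v‖ ^ 2 = inner ℝ ((B - A) v) (B v) := by
          rw [_root_.sub_apply, inner_sub_left, horth, sub_zero,
            real_inner_self_eq_norm_sq]
      _ ≤ ‖(B - A) v‖ * ‖B v‖ := real_inner_le_norm _ _
      _ ≤ ‖A - B‖ * ‖v‖ * ‖B v‖ := by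
          rw [norm_sub_rev A B]
          gcongr
          exact (B - A).le_opNorm v
      _ ≤ ‖A - B‖ * (M * ‖B v‖) * ‖B v‖ := by gcongr
      _ = (‖A - B‖ * M) * ‖B v‖ ^ 2 := by ring
  have hzero : ‖B v‖ ^ 2 = 0 := le_antisymm (by nlinarith) (sq_nonneg _)
  simpa using hzero

theorem PreimageBound.finrank_range_le [FiniteDimensional ℝ W] {A B : V →L[ℝ] W} {M : ℝ}
    (hB : PreimageBound B M) (hAB : ‖A - B‖ * M < 1) :
    finrank ℝ (LinearMap.range (B : V →ₗ[ℝ] W)) ≤ finrank ℝ (LinearMap.range (A : V →ₗ[ℝ] W)) := by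
  have hdisj := Submodule.finrank_add_finrank_le_of_disjoint (hB.disjoint_range_orthogonal hAB)
  have hcompl := (LinearMap.range (A : V →ₗ[ℝ] W)).finrank_add_finrank_orthogonal
  omega

theorem preimageBound_of_mul_norm_adjoint_le [FiniteDimensional ℝ V] [FiniteDimensional ℝ W]
    (A : V →L[ℝ] W) {c C : ℝ} (hc : 0 < c)
    (h : ∀ w, c * ‖ContinuousLinearMap.adjoint A w‖ ≤ C * ‖A (ContinuousLinearMap.adjoint A w)‖) :
    PreimageBound A (C / c) := by
  intro w hw
  rw [← LinearMap.range_self_comp_adjoint, ContinuousLinearMap.adjoint_toLinearMap] at hw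
  obtain ⟨z, rfl⟩ := hw
  refine ⟨ContinuousLinearMap.adjoint A z, rfl, ?_⟩
  rw [div_mul_eq_mul_div, le_div_iff₀ hc, mul_comm]
  exact h z

theorem eventually_finrank_range_eq [FiniteDimensional ℝ W] {X : Type*} [TopologicalSpace X]
    {f : X → V →L[ℝ] W} {x₀ : X} {M : ℝ} (hf : ContinuousAt f x₀)
    (hM : ∀ᶠ x in 𝓝 x₀, PreimageBound (f x) M) :
    (fun x => finrank ℝ (LinearMap.range (f x : V →ₗ[ℝ] W))) =ᶠ[𝓝 x₀]
      fun _ => finrank ℝ (LinearMap.range (f x₀ : V →ₗ[ℝ] W)) := by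
  have hclose : ∀ᶠ x in 𝓝 x₀, ‖f x - f x₀‖ * M < 1 := by
    have hlim : Tendsto (fun x => ‖f x - f x₀‖ * M) (𝓝 x₀) (𝓝 0) := by
      simpa using (hf.sub_const (f x₀)).norm.mul_const M
    exact hlim.eventually_lt_const one_pos
  filter_upwards [hM, hclose] with x hx hxclose
  refine le_antisymm ?_ (hM.self_of_nhds.finrank_range_le hxclose)
  exact hx.finrank_range_le (by rwa [norm_sub_rev])

end PreimageBound

theorem eventually_preimageBound_of_symbol_bound {E V W : Type*} [NormedAddCommGroup E]
    [NormedAddCommGroup V] [InnerProductSpace ℝ V] [FiniteDimensional ℝ V]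
    [NormedAddCommGroup W] [InnerProductSpace ℝ W] [FiniteDimensional ℝ W]
    (k : ℕ) (𝒜 : E → V →L[ℝ] W) (C : ℝ)
    (hbound : ∀ ξ : E, ξ ≠ 0 → ∀ w : W,
      ‖ξ‖ ^ k * ‖ContinuousLinearMap.adjoint (𝒜 ξ) w‖ ≤
        C * ‖(𝒜 ξ) (ContinuousLinearMap.adjoint (𝒜 ξ) w)‖)
    {ξ₀ : E} (hξ₀ : ξ₀ ≠ 0) :
    ∀ᶠ ξ in 𝓝 ξ₀, PreimageBound (𝒜 ξ) (C / (‖ξ₀‖ / 2) ^ k) := by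
  have hhalf : 0 < ‖ξ₀‖ / 2 := half_pos (norm_pos_iff.mpr hξ₀)
  have hnorm : ∀ᶠ ξ in 𝓝 ξ₀, ‖ξ₀‖ / 2 < ‖ξ‖ :=
    continuous_norm.continuousAt.eventually_const_lt (half_lt_self (norm_pos_iff.mpr hξ₀))
  filter_upwards [hnorm] with ξ hξ
  refine preimageBound_of_mul_norm_adjoint_le _ (pow_pos hhalf k) fun w => ?_
  calc (‖ξ₀‖ / 2) ^ k * ‖ContinuousLinearMap.adjoint (𝒜 ξ) w‖
      ≤ ‖ξ‖ ^ k * ‖ContinuousLinearMap.adjoint (𝒜 ξ) w‖ := by gcongr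
    _ ≤ C * ‖(𝒜 ξ) (ContinuousLinearMap.adjoint (𝒜 ξ) w)‖ :=
      hbound ξ (norm_pos_iff.mp (hhalf.trans hξ)) w

theorem constant_rank_of_symbol_bound_general
    {V W : Type*} [NormedAddCommGroup V] [InnerProductSpace ℝ V] [FiniteDimensional ℝ V]
    [NormedAddCommGroup W] [InnerProductSpace ℝ W] [FiniteDimensional ℝ W]
    {n : ℕ} (hn : 2 ≤ n) (k : ℕ)
    (𝒜 : EuclideanSpace ℝ (Fin n) → (V →L[ℝ] W))
    (hcont : ContinuousOn 𝒜 {ξ | ξ ≠ 0})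
    (C : ℝ)
    (hbound : ∀ (ξ : EuclideanSpace ℝ (Fin n)), ξ ≠ 0 → ∀ w : W,
      ‖ξ‖ ^ k * ‖ContinuousLinearMap.adjoint (𝒜 ξ) w‖ ≤
        C * ‖(𝒜 ξ) (ContinuousLinearMap.adjoint (𝒜 ξ) w)‖) :
    ∀ (ξ₁ ξ₂ : EuclideanSpace ℝ (Fin n)), ξ₁ ≠ 0 → ξ₂ ≠ 0 →
      finrank ℝ (LinearMap.range (𝒜 ξ₁ : V →ₗ[ℝ] W)) = finrank ℝ (LinearMap.range (𝒜 ξ₂ : V →ₗ[ℝ] W)) := by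
  intro ξ₁ ξ₂ h₁ h₂
  have hrank : 1 < Module.rank ℝ (EuclideanSpace ℝ (Fin n)) := by
    rw [← Module.finrank_eq_rank, finrank_euclideanSpace_fin]
    exact_mod_cast hn
  have hconn : IsPreconnected {ξ : EuclideanSpace ℝ (Fin n) | ξ ≠ 0} :=
    (isConnected_compl_singleton_of_one_lt_rank hrank 0).isPreconnected
  have hlocal : ContinuousOn (fun ξ => finrank ℝ (LinearMap.range (𝒜 ξ : V →ₗ[ℝ] W)))
      {ξ | ξ ≠ 0} := fun ξ hξ =>
    (eventually_finrank_range_eq (hcont.continuousAt (isOpen_ne.mem_nhds hξ))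
      (eventually_preimageBound_of_symbol_bound k 𝒜 C hbound hξ)).continuousAt.continuousWithinAt
  exact hconn.constant hlocal h₁ h₂

/-- If `𝒜` is continuous, positively `k`-homogeneous on `ℝⁿ \ {0}` (`n ≥ 2`) and satisfies
`|ξ|^k ‖𝒜(ξ)* w‖ ≤ C ‖𝒜(ξ) 𝒜(ξ)* w‖`, then `𝒜` has constant rank on `ℝⁿ \ {0}`. -/
theorem constant_rank_of_symbol_bound
    {V W : Type*} [NormedAddCommGroup V] [InnerProductSpace ℝ V] [FiniteDimensional ℝ V]
    [NormedAddCommGroup W] [InnerProductSpace ℝ W] [FiniteDimensional ℝ W]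
    {n : ℕ} (hn : 2 ≤ n) (k : ℕ)
    (𝒜 : EuclideanSpace ℝ (Fin n) → (V →L[ℝ] W))
    (hcont : ContinuousOn 𝒜 {ξ | ξ ≠ 0})
    (hhom : ∀ t : ℝ, 0 < t → ∀ ξ : EuclideanSpace ℝ (Fin n), ξ ≠ 0 →
      𝒜 (t • ξ) = t ^ k • 𝒜 ξ)
    (C : ℝ) (hC : 0 < C)
    (hbound : ∀ (ξ : EuclideanSpace ℝ (Fin n)), ξ ≠ 0 → ∀ w : W,
      ‖ξ‖ ^ k * ‖ContinuousLinearMap.adjoint (𝒜 ξ) w‖ ≤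
        C * ‖(𝒜 ξ) (ContinuousLinearMap.adjoint (𝒜 ξ) w)‖) :
    ∀ (ξ₁ ξ₂ : EuclideanSpace ℝ (Fin n)), ξ₁ ≠ 0 → ξ₂ ≠ 0 →
      finrank ℝ (LinearMap.range (𝒜 ξ₁ : V →ₗ[ℝ] W)) = finrank ℝ (LinearMap.range (𝒜 ξ₂ : V →ₗ[ℝ] W)) :=
  constant_rank_of_symbol_bound_general hn k 𝒜 hcont C hbound
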